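/- Fix τ ∈ ℂ with Im τ ≠ 0, let Λ = {m + n·τ : m, n ∈ ℤ}, and let p, q ∈ ℂ with p − q ∉ Λ. Let f, g : ℂ → ℂ be Λ-elliptic functions such that: f is analytic at every z ∉ p + Λ and meromorphicOrderAt f z = −2 for every z ∈ p + Λ; g is analytic at every z ∉ q + Λ and meromorphicOrderAt g z = −2 for every z ∈ q + Λ. Suppose there exist a, b, c, d ∈ ℂ with a·d − b·c ≠ 0 such that f(z)·(c·g(z) + d) = a·g(z) + b for every z ∉ (p + Λ) ∪ (q + Λ). Then 2·(p − q) ∈ Λ. -/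

import Mathlib

/-!
For an elliptic function `h` whose only poles are at most double, on `c + Λ`, the odd elliptic
function `δ z = h (c + z) - h (c - z)` has at most simple poles (an odd function has no pole of
even order), all on `Λ`, and vanishes at the half-periods. Hence `δ z * δ (z + ω₁ / 2)` has no
poles; by Liouville it is constant, and it vanishes at `ω₂ / 2`, so `δ = 0`: `h` is even about `c`.

Applied to `f` and `p`, the Möbius relation transfers this symmetry to `g` near `q`, since
`c f - a` does not vanish identically (`f` has a pole). So `g w = g (2p - w)` near `q`, and the
pole of `g` at `q` forces a pole at `2p - q`, i.e. `2p - q ∈ q + Λ`.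
-/

-- The order of a meromorphic function at a point, as an element of `ℤ ∪ {∞}`
-- (junk value `0` if the function is not meromorphic at the point).
open Classical in
noncomputable def meromorphicOrderAt' (f : ℂ → ℂ) (x : ℂ) : WithTop ℤ :=
  if h : MeromorphicAt f x then
    ((analyticOrderAt (fun z ↦ (z - x) ^ h.choose • f z) x).map (↑· : ℕ → ℤ)) - h.choose
  else 0

/-- The lattice `Λ = {m + n·τ : m, n ∈ ℤ}` generated by `1` and `τ`. -/
def latticeSet (τ : ℂ) : Set ℂ := {z | ∃ m n : ℤ, z = (m : ℂ) + (n : ℂ) * τ}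

/-- A function `h : ℂ → ℂ` is `Λ`-elliptic (for the lattice generated by `1` and `τ`)
if it is meromorphic on all of `ℂ` and doubly periodic with periods `1` and `τ`. -/
def IsElliptic (τ : ℂ) (h : ℂ → ℂ) : Prop :=
  MeromorphicOn h Set.univ ∧ (∀ z, h (z + 1) = h z) ∧ (∀ z, h (z + τ) = h z)

open Filter Function Topology Set

lemma meromorphicOrderAt'_eq_meromorphicOrderAt (f : ℂ → ℂ) (x : ℂ) :
    meromorphicOrderAt' f x = meromorphicOrderAt f x := rfl

lemma WithTop.add_nonneg_of_neg_one_le_of_pos {a b : WithTop ℤ}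
    (ha : ((-1 : ℤ) : WithTop ℤ) ≤ a) (hb : 0 < b) : 0 ≤ a + b := by
  induction a using WithTop.recTopCoe with
  | top => simp
  | coe a =>
    induction b using WithTop.recTopCoe with
    | top => simp
    | coe b =>
      have := WithTop.coe_le_coe.1 ha
      have : 0 < b := WithTop.coe_lt_coe.1 hb
      exact_mod_cast (show 0 ≤ a + b by omega)

lemma meromorphicOrderAt_ne_of_odd {f : ℂ → ℂ} (hf : MeromorphicAt f 0) (hodd : f.Odd)
    {n : ℤ} (hn : Even n) : meromorphicOrderAt f 0 ≠ n := by
  intro hord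
  obtain ⟨G, hGan, hG0, hfG⟩ := (meromorphicOrderAt_eq_int_iff hf).1 hord
  have hneg : Tendsto (Neg.neg : ℂ → ℂ) (𝓝[≠] 0) (𝓝[≠] 0) := by
    have h := (neg_nhdsNE (a := (0 : ℂ))).le
    rwa [neg_zero] at h
  have hsum : (fun z ↦ G (-z) + G z) =ᶠ[𝓝[≠] 0] fun _ ↦ 0 := by
    filter_upwards [hfG, hneg.eventually hfG, self_mem_nhdsWithin] with z hz hz' hz0
    simp only [hodd z, hz, smul_eq_mul, sub_zero, hn.neg_zpow] at hz'
    exact (mul_eq_zero.1 (by linear_combination -hz')).resolve_left (zpow_ne_zero n hz0)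
  have hG0' := ((((hGan.comp_of_eq (by fun_prop) neg_zero).add hGan).continuousAt
    |>.eventuallyEq_nhds_iff_eventuallyEq_nhdsNE continuousAt_const).1 hsum).eq_of_nhds
  exact hG0 (by simpa using hG0')

lemma Function.Periodic.meromorphicOrderAt_add {f : ℂ → ℂ} {l : ℂ} (hf : Periodic f l)
    (x : ℂ) : meromorphicOrderAt f (x + l) = meromorphicOrderAt f x := by
  rw [← meromorphicOrderAt_comp_add_const_eq_meromorphicOrderAt]
  exact congrArg (meromorphicOrderAt · x) (funext hf)

lemma MeromorphicOn.eventually_ne_of_meromorphicOrderAt_neg {f : ℂ → ℂ}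
    (hf : MeromorphicOn f univ) {p : ℂ} (hp : meromorphicOrderAt f p < 0) (C x : ℂ) :
    ∀ᶠ w in 𝓝[≠] x, f w ≠ C := by
  have hφ : MeromorphicOn (f · - C) univ := fun z _ ↦ by have := hf z trivial; fun_prop
  have hpole : ∀ᶠ w in 𝓝[≠] p, f w - C ≠ 0 := by
    filter_upwards [(tendsto_cobounded_of_meromorphicOrderAt_neg hp).eventually
      (Bornology.isBounded_def.1 (Bornology.isBounded_singleton (x := C)))] with w hw
    exact sub_ne_zero.2 hw
  have hx := hφ.meromorphicOrderAt_ne_top_of_isPreconnected isPreconnected_univ (mem_univ p)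
    (mem_univ x) ((meromorphicOrderAt_ne_top_iff_eventually_ne_zero (hφ p trivial)).2 hpole)
  filter_upwards [(meromorphicOrderAt_ne_top_iff_eventually_ne_zero (hφ x trivial)).1 hx]
    with w hw
  exact sub_ne_zero.1 hw

lemma MeromorphicOn.eventually_mul_sub_ne_zero {f : ℂ → ℂ} (hf : MeromorphicOn f univ) {p : ℂ}
    (hp : meromorphicOrderAt f p < 0) {a c : ℂ} (hac : c ≠ 0 ∨ a ≠ 0) (x : ℂ) :
    ∀ᶠ w in 𝓝[≠] x, c * f w - a ≠ 0 := by
  rcases eq_or_ne c 0 with rfl | hc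
  · exact Eventually.of_forall fun _ ↦ by simpa using hac
  · filter_upwards [hf.eventually_ne_of_meromorphicOrderAt_neg hp (a / c) x] with w hw
    exact sub_ne_zero.2 fun h ↦ hw (by rw [← h, mul_div_cancel_left₀ _ hc])

lemma eq_of_mobius_relation {a b c d x u v : ℂ} (hu : x * (c * u + d) = a * u + b)
    (hv : x * (c * v + d) = a * v + b) (hx : c * x - a ≠ 0) : u = v :=
  sub_eq_zero.1 <| (mul_eq_zero.1 (by linear_combination hu - hv)).resolve_left hx

def mirrorDiff (h : ℂ → ℂ) (c z : ℂ) : ℂ := h (c + z) - h (c - z)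

section mirrorDiff

variable {h : ℂ → ℂ} {c : ℂ}

lemma mirrorDiff_odd : (mirrorDiff h c).Odd := fun z ↦ by
  simp only [mirrorDiff, sub_neg_eq_add, ← sub_eq_add_neg, neg_sub]

lemma MeromorphicOn.mirrorDiff (hh : MeromorphicOn h univ) (c : ℂ) :
    MeromorphicOn (mirrorDiff h c) univ := fun z _ ↦ by
  have := hh (c + z) trivial
  have := hh (c - z) trivial
  unfold _root_.mirrorDiff
  fun_prop

lemma neg_one_le_meromorphicOrderAt_mirrorDiff (hh : MeromorphicAt h c)
    (hord : ((-2 : ℤ) : WithTop ℤ) ≤ meromorphicOrderAt h c) :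
    ((-1 : ℤ) : WithTop ℤ) ≤ meromorphicOrderAt (mirrorDiff h c) 0 := by
  have hmer₁ : MeromorphicAt (h ∘ (c + ·)) 0 := by
    have : MeromorphicAt h (c + 0) := by simpa using hh
    fun_prop
  have hmer₂ : MeromorphicAt (-(h ∘ (c - ·))) 0 := by
    have : MeromorphicAt h (c - 0) := by simpa using hh
    fun_prop
  have hord₁ : meromorphicOrderAt (h ∘ (c + ·)) 0 = meromorphicOrderAt h c := by
    simpa using meromorphicOrderAt_comp_of_deriv_ne_zero (f := h) (g := (c + ·)) (x := 0)
      (by fun_prop) (by simp)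
  have hord₂ : meromorphicOrderAt (-(h ∘ (c - ·))) 0 = meromorphicOrderAt h c := by
    simpa [← meromorphicOrderAt_neg] using meromorphicOrderAt_comp_of_deriv_ne_zero (f := h)
      (g := (c - ·)) (x := 0) (by fun_prop) (by simp)
  have hsplit : mirrorDiff h c = h ∘ (c + ·) + -(h ∘ (c - ·)) := by
    ext z
    simp [mirrorDiff, sub_eq_add_neg]
  have hge : ((-2 : ℤ) : WithTop ℤ) ≤ meromorphicOrderAt (mirrorDiff h c) 0 := by
    rw [hsplit]
    refine le_trans ?_ (meromorphicOrderAt_add hmer₁ hmer₂)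
    rwa [hord₁, hord₂, min_self]
  have hne := meromorphicOrderAt_ne_of_odd (hsplit ▸ hmer₁.add hmer₂) mirrorDiff_odd
    (n := -2) (by decide)
  revert hge hne
  induction meromorphicOrderAt (mirrorDiff h c) 0 using WithTop.recTopCoe with
  | top => simp
  | coe n =>
    simp only [WithTop.coe_le_coe, ne_eq, WithTop.coe_eq_coe]
    omega

end mirrorDiff

namespace PeriodPair

variable (L : PeriodPair) {h : ℂ → ℂ} {c : ℂ}

lemma ω₂_div_two_add_ω₁_div_two_notMem_lattice : L.ω₂ / 2 + L.ω₁ / 2 ∉ L.lattice := by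
  convert (mul_ω₁_add_mul_ω₂_mem_lattice (α := 2⁻¹) (β := 2⁻¹)).not.2 (by norm_num) using 2
  simp only [Rat.cast_inv, Rat.cast_ofNat]
  ring

lemma eventually_sub_notMem_lattice (x v : ℂ) : ∀ᶠ w in 𝓝[≠] x, w - v ∉ L.lattice := by
  have hnhds : ∀ᶠ w in 𝓝 x, w - v ∉ (L.lattice : Set ℂ) \ {x - v} :=
    (continuous_sub_right v).continuousAt.preimage_mem_nhds
      (L.compl_lattice_sdiff_singleton_mem_nhds (x - v))
  filter_upwards [nhdsWithin_le_nhds hnhds, self_mem_nhdsWithin] with w hw hwx hmem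
  exact hw ⟨hmem, fun h ↦ hwx (sub_left_inj.1 h)⟩

lemma eq_of_differentiable_of_periodic {F : ℂ → ℂ} (hF : Differentiable ℂ F)
    (hper : ∀ l ∈ L.lattice, Periodic F l) (z w : ℂ) : F z = F w := by
  refine hF.apply_eq_apply_of_bounded ?_ z w
  have hD := (ZSpan.fundamentalDomain_isBounded L.basis).isCompact_closure
  refine ((hD.image hF.continuous).isBounded).subset ?_
  rintro _ ⟨y, rfl⟩
  refine ⟨ZSpan.fract L.basis y, subset_closure (ZSpan.fract_mem_fundamentalDomain _ y), ?_⟩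
  have hfloor : (ZSpan.floor L.basis y : ℂ) ∈ L.lattice := by
    rw [lattice_eq_span_range_basis]
    exact (ZSpan.floor L.basis y).2
  rw [ZSpan.fract_apply, sub_eq_add_neg, hper _ (neg_mem hfloor)]

lemma exists_eventuallyEq_const_of_meromorphicOrderAt_nonneg {P : ℂ → ℂ}
    (hmer : MeromorphicOn P univ) (hper : ∀ l ∈ L.lattice, Periodic P l)
    (hord : ∀ x, 0 ≤ meromorphicOrderAt P x) : ∃ C, ∀ x, P =ᶠ[𝓝[≠] x] fun _ ↦ C := by
  set F := toMeromorphicNFOn P univ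
  have hFP (x : ℂ) : F =ᶠ[𝓝[≠] x] P := hmer.toMeromorphicNFOn_eq_self_on_nhdsNE (mem_univ x)
  have hFan (x : ℂ) : AnalyticAt ℂ F x := by
    have hNF := meromorphicNFOn_toMeromorphicNFOn P univ (mem_univ x)
    rw [← hNF.meromorphicOrderAt_nonneg_iff_analyticAt, meromorphicOrderAt_congr (hFP x)]
    exact hord x
  have hFper (l : ℂ) (hl : l ∈ L.lattice) : Periodic F l := fun x ↦ by
    have hshift : (fun w ↦ F (w + l)) =ᶠ[𝓝[≠] x] F := by
      filter_upwards [(hFP (x + l)).comp_tendsto (map_add_right_nhdsNE (c := l) (a := x)).le,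
        hFP x] with w hw hw'
      simp only [comp_apply] at hw
      rw [hw, hper l hl, hw']
    exact ((((hFan _).comp_of_eq (by fun_prop) rfl).continuousAt
      |>.eventuallyEq_nhds_iff_eventuallyEq_nhdsNE (hFan x).continuousAt).1 hshift).eq_of_nhds
  refine ⟨F 0, fun x ↦ (hFP x).symm.trans (Eventually.of_forall fun w ↦ ?_)⟩
  exact L.eq_of_differentiable_of_periodic (fun y ↦ (hFan y).differentiableAt) hFper w 0

lemma periodic_mirrorDiff (hper : ∀ l ∈ L.lattice, Periodic h l) {l : ℂ} (hl : l ∈ L.lattice) :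
    Periodic (mirrorDiff h c) l := fun z ↦ by
  rw [mirrorDiff, mirrorDiff, ← add_assoc, hper l hl, sub_add_eq_sub_sub, (hper l hl).sub_eq]

lemma mirrorDiff_half_eq_zero (hper : ∀ l ∈ L.lattice, Periodic h l) {l : ℂ}
    (hl : l ∈ L.lattice) : mirrorDiff h c (l / 2) = 0 := by
  rw [mirrorDiff, show c + l / 2 = c - l / 2 + l by ring, hper l hl, sub_self]

lemma analyticAt_mirrorDiff (han : ∀ z, z - c ∉ L.lattice → AnalyticAt ℂ h z) {z : ℂ}
    (hz : z ∉ L.lattice) : AnalyticAt ℂ (mirrorDiff h c) z := by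
  have := han (c + z) (by simpa using hz)
  have := han (c - z) (by simpa [neg_mem_iff] using hz)
  unfold mirrorDiff
  fun_prop

lemma meromorphicOrderAt_mirrorDiff_mul_nonneg (hmer : MeromorphicOn h univ)
    (hper : ∀ l ∈ L.lattice, Periodic h l) (han : ∀ z, z - c ∉ L.lattice → AnalyticAt ℂ h z)
    (hord : ((-2 : ℤ) : WithTop ℤ) ≤ meromorphicOrderAt h c) (x : ℂ) :
    0 ≤ meromorphicOrderAt (mirrorDiff h c * (mirrorDiff h c ∘ (· + L.ω₁ / 2))) x := by
  have hδ := hmer.mirrorDiff c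
  have hpole {l : ℂ} (hl : l ∈ L.lattice) :
      ((-1 : ℤ) : WithTop ℤ) ≤ meromorphicOrderAt (mirrorDiff h c) l := by
    rw [← zero_add l, (L.periodic_mirrorDiff hper hl).meromorphicOrderAt_add]
    exact neg_one_le_meromorphicOrderAt_mirrorDiff (hmer c trivial) hord
  have hzero {y : ℂ} (hy : y ∉ L.lattice) (h2y : 2 * y ∈ L.lattice) :
      0 < meromorphicOrderAt (mirrorDiff h c) y := by
    rw [← tendsto_zero_iff_meromorphicOrderAt_pos (hδ y trivial)]
    have hδy : mirrorDiff h c y = 0 := by simpa using L.mirrorDiff_half_eq_zero (c := c) hper h2y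
    simpa [hδy] using
      (L.analyticAt_mirrorDiff han hy).continuousAt.tendsto.mono_left nhdsWithin_le_nhds
  rw [meromorphicOrderAt_mul (hδ x trivial) (by have := hδ (x + L.ω₁ / 2) trivial; fun_prop),
    meromorphicOrderAt_comp_add_const_eq_meromorphicOrderAt]
  by_cases hx : x ∈ L.lattice
  · refine WithTop.add_nonneg_of_neg_one_le_of_pos (hpole hx)
      (hzero (fun h ↦ L.ω₁_div_two_notMem_lattice ?_) ?_)
    · simpa using sub_mem h hx
    · convert add_mem (add_mem hx hx) L.ω₁_mem_lattice using 1
      ring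
  by_cases hx' : x + L.ω₁ / 2 ∈ L.lattice
  · rw [add_comm]
    refine WithTop.add_nonneg_of_neg_one_le_of_pos (hpole hx') (hzero hx ?_)
    convert sub_mem (add_mem hx' hx') L.ω₁_mem_lattice using 1
    ring
  · exact add_nonneg (L.analyticAt_mirrorDiff han hx).meromorphicOrderAt_nonneg
      (L.analyticAt_mirrorDiff han hx').meromorphicOrderAt_nonneg

lemma meromorphicOrderAt_mirrorDiff_mul_eq_top (hmer : MeromorphicOn h univ)
    (hper : ∀ l ∈ L.lattice, Periodic h l) (han : ∀ z, z - c ∉ L.lattice → AnalyticAt ℂ h z)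
    (hord : ((-2 : ℤ) : WithTop ℤ) ≤ meromorphicOrderAt h c) :
    meromorphicOrderAt (mirrorDiff h c * (mirrorDiff h c ∘ (· + L.ω₁ / 2))) (L.ω₂ / 2) = ⊤ := by
  set P := mirrorDiff h c * (mirrorDiff h c ∘ (· + L.ω₁ / 2))
  have hδ := hmer.mirrorDiff c
  have hPmer : MeromorphicOn P univ := fun x _ ↦ by
    have := hδ x trivial
    have := hδ (x + L.ω₁ / 2) trivial
    fun_prop
  have hPper (l : ℂ) (hl : l ∈ L.lattice) : Periodic P l := fun x ↦ by
    simp only [P, Pi.mul_apply, comp_apply, add_right_comm x l,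
      L.periodic_mirrorDiff hper hl x, L.periodic_mirrorDiff hper hl (x + L.ω₁ / 2)]
  obtain ⟨C, hC⟩ := L.exists_eventuallyEq_const_of_meromorphicOrderAt_nonneg hPmer hPper
    (L.meromorphicOrderAt_mirrorDiff_mul_nonneg hmer hper han hord)
  have hPan : AnalyticAt ℂ P (L.ω₂ / 2) :=
    (L.analyticAt_mirrorDiff han L.ω₂_div_two_notMem_lattice).mul
      ((L.analyticAt_mirrorDiff han L.ω₂_div_two_add_ω₁_div_two_notMem_lattice).comp_of_eq
        (by fun_prop) rfl)
  have hC0 : C = 0 := by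
    rw [← ((hPan.continuousAt.eventuallyEq_nhds_iff_eventuallyEq_nhdsNE continuousAt_const).1
      (hC _)).eq_of_nhds]
    simp [P, L.mirrorDiff_half_eq_zero hper L.ω₂_mem_lattice]
  exact meromorphicOrderAt_eq_top_iff.2 (hC0 ▸ hC _)

lemma mirrorDiff_eq_zero (hmer : MeromorphicOn h univ)
    (hper : ∀ l ∈ L.lattice, Periodic h l) (han : ∀ z, z - c ∉ L.lattice → AnalyticAt ℂ h z)
    (hord : ((-2 : ℤ) : WithTop ℤ) ≤ meromorphicOrderAt h c) {z : ℂ} (hz : z ∉ L.lattice) :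
    mirrorDiff h c z = 0 := by
  have hδ := hmer.mirrorDiff c
  have htop := L.meromorphicOrderAt_mirrorDiff_mul_eq_top hmer hper han hord
  rw [meromorphicOrderAt_mul (hδ _ trivial)
      (by have := hδ (L.ω₂ / 2 + L.ω₁ / 2) trivial; fun_prop),
    meromorphicOrderAt_comp_add_const_eq_meromorphicOrderAt, WithTop.add_eq_top] at htop
  have hztop : meromorphicOrderAt (mirrorDiff h c) z = ⊤ := by
    by_contra hne
    obtain h | h := htop <;>
      exact hδ.meromorphicOrderAt_ne_top_of_isPreconnected isPreconnected_univ (mem_univ z)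
        (mem_univ _) hne h
  exact (((L.analyticAt_mirrorDiff han hz).continuousAt.eventuallyEq_nhds_iff_eventuallyEq_nhdsNE
    continuousAt_const).1 (meromorphicOrderAt_eq_top_iff.1 hztop)).eq_of_nhds

lemma apply_two_mul_sub_eq (hmer : MeromorphicOn h univ)
    (hper : ∀ l ∈ L.lattice, Periodic h l) (han : ∀ z, z - c ∉ L.lattice → AnalyticAt ℂ h z)
    (hord : ((-2 : ℤ) : WithTop ℤ) ≤ meromorphicOrderAt h c) {w : ℂ} (hw : w - c ∉ L.lattice) :
    h (2 * c - w) = h w := by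
  have := L.mirrorDiff_eq_zero hmer hper han hord hw
  rw [mirrorDiff, sub_eq_zero] at this
  convert this.symm using 2 <;> ring

end PeriodPair

lemma linearIndependent_one_of_im_ne_zero {τ : ℂ} (hτ : τ.im ≠ 0) :
    LinearIndependent ℝ ![1, τ] := by
  refine LinearIndependent.pair_iff.2 fun s t hst ↦ ?_
  have him := congrArg Complex.im hst
  have hre := congrArg Complex.re hst
  simp only [Complex.real_smul, Complex.add_im, Complex.mul_im, Complex.ofReal_re,
    Complex.ofReal_im, Complex.one_im, Complex.add_re, Complex.mul_re, Complex.one_re,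
    Complex.zero_im, Complex.zero_re] at him hre
  obtain rfl : t = 0 := by simpa [hτ] using him
  simpa using hre

def PeriodPair.ofTau (τ : ℂ) (hτ : τ.im ≠ 0) : PeriodPair :=
  ⟨1, τ, linearIndependent_one_of_im_ne_zero hτ⟩

lemma latticeSet_eq_lattice {τ : ℂ} (hτ : τ.im ≠ 0) :
    latticeSet τ = (PeriodPair.ofTau τ hτ).lattice := by
  ext z
  simp [latticeSet, PeriodPair.mem_lattice, PeriodPair.ofTau, eq_comm]

lemma IsElliptic.periodic {τ : ℂ} {h : ℂ → ℂ} (hh : IsElliptic τ h) (hτ : τ.im ≠ 0) :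
    ∀ l ∈ (PeriodPair.ofTau τ hτ).lattice, Periodic h l := by
  intro l hl
  obtain ⟨m, n, rfl⟩ := PeriodPair.mem_lattice.1 hl
  exact (Periodic.int_mul hh.2.1 m).add_period (Periodic.int_mul hh.2.2 n)

theorem mobius_relation_implies_two_torsion_general (τ : ℂ) (hτ : τ.im ≠ 0) (p q : ℂ)
    (f g : ℂ → ℂ) (hf : IsElliptic τ f)
    (hfan : ∀ z : ℂ, z - p ∉ latticeSet τ → AnalyticAt ℂ f z)
    (hford : ∀ z : ℂ, z - p ∈ latticeSet τ →
      meromorphicOrderAt' f z = ((-2 : ℤ) : WithTop ℤ))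
    (hgan : ∀ z : ℂ, z - q ∉ latticeSet τ → AnalyticAt ℂ g z)
    (hgord : ∀ z : ℂ, z - q ∈ latticeSet τ →
      meromorphicOrderAt' g z = ((-2 : ℤ) : WithTop ℤ))
    (hmob : ∃ a b c d : ℂ, a * d - b * c ≠ 0 ∧
      ∀ z : ℂ, z - p ∉ latticeSet τ → z - q ∉ latticeSet τ →
        f z * (c * g z + d) = a * g z + b) :
    2 * (p - q) ∈ latticeSet τ := by
  obtain ⟨a, b, c, d, hdet, hrel⟩ := hmob
  simp only [latticeSet_eq_lattice hτ, meromorphicOrderAt'_eq_meromorphicOrderAt] at *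
  set L := PeriodPair.ofTau τ hτ
  have hfp := hford p (by simp)
  have hdenom : ∀ᶠ w in 𝓝[≠] q, c * f w - a ≠ 0 :=
    hf.1.eventually_mul_sub_ne_zero (by rw [hfp]; exact WithTop.coe_lt_coe.2 (by norm_num))
      (by contrapose! hdet; simp [hdet]) q
  by_contra h2
  have hgsymm : g =ᶠ[𝓝[≠] q] fun w ↦ g (2 * p - w) := by
    filter_upwards [L.eventually_sub_notMem_lattice q p, L.eventually_sub_notMem_lattice q q,
      L.eventually_sub_notMem_lattice q (2 * p - q), hdenom] with w hwp hwq hw' hne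
    refine eq_of_mobius_relation (hrel w hwp hwq) ?_ hne
    rw [← L.apply_two_mul_sub_eq hf.1 (hf.periodic hτ) hfan hfp.ge hwp]
    refine hrel _ ?_ ?_
    · rwa [show 2 * p - w - p = -(w - p) by ring, SetLike.mem_coe, neg_mem_iff]
    · rwa [show 2 * p - w - q = -(w - (2 * p - q)) by ring, SetLike.mem_coe, neg_mem_iff]
  have hgq : AnalyticAt ℂ (fun w ↦ g (2 * p - w)) q :=
    (hgan (2 * p - q) (by rwa [show 2 * p - q - q = 2 * (p - q) by ring])).comp_of_eq
      (by fun_prop) rfl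
  have := hgq.meromorphicOrderAt_nonneg
  rw [← meromorphicOrderAt_congr hgsymm, hgord q (by simp)] at this
  exact absurd (WithTop.coe_nonneg.1 this) (by norm_num)

/-- The complex-analytic core of Proposition 3.9: if the degree-two elliptic functions
with double poles at `p + Λ` and `q + Λ` are related by a Moebius transformation,
then `2(p - q) ∈ Λ`. -/
theorem mobius_relation_implies_two_torsion (τ : ℂ) (hτ : τ.im ≠ 0) (p q : ℂ)
    (hpq : p - q ∉ latticeSet τ)
    (f g : ℂ → ℂ) (hf : IsElliptic τ f) (hg : IsElliptic τ g)
    (hfan : ∀ z : ℂ, z - p ∉ latticeSet τ → AnalyticAt ℂ f z)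
    (hford : ∀ z : ℂ, z - p ∈ latticeSet τ →
      meromorphicOrderAt' f z = ((-2 : ℤ) : WithTop ℤ))
    (hgan : ∀ z : ℂ, z - q ∉ latticeSet τ → AnalyticAt ℂ g z)
    (hgord : ∀ z : ℂ, z - q ∈ latticeSet τ →
      meromorphicOrderAt' g z = ((-2 : ℤ) : WithTop ℤ))
    (hmob : ∃ a b c d : ℂ, a * d - b * c ≠ 0 ∧
      ∀ z : ℂ, z - p ∉ latticeSet τ → z - q ∉ latticeSet τ →
        f z * (c * g z + d) = a * g z + b) :
    2 * (p - q) ∈ latticeSet τ :=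
  mobius_relation_implies_two_torsion_general τ hτ p q f g hf hfan hford hgan hgord hmob
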